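/- arXiv:2010.13949 — 3 statements merged into one kernel-verified Lean document; each statement's English description precedes it below -/
import Mathlib

section
/- Let u_1,...,u_k be a farthest-first traversal of length k of a finite metric space (C,d). If there exist indices a < b ≤ k, a point o ∈ X in the ambient metric space, and λ ≥ 0 such that d(o,u_a) ≤ λ and d(o,u_b) ≤ λ, then every point x ∈ C satisfies min_{1 ≤ j ≤ k} d(x, u_j) ≤ 2λ. (Key step in the proof of Theorem 1: if two greedy clients fall in one optimal ball, all clients are within 2λ of the greedy clients.) -/
/-- `u : Fin k → X` is a farthest-first traversal of the finite set `C`: every `u j` lies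
in `C`, and for each `j` with `0 < j`, the point `u j` maximizes over `x ∈ C` the distance
`min_{i < j} d(x, u i)` to the previously chosen points (expressed here without `min`:
every `x ∈ C` admits an earlier index `i < j` with `d(x, u i) ≤ d(u j, u i')` for all
`i' < j`). -/
def IsFarthestFirstTraversal {X : Type*} [MetricSpace X] (C : Finset X) (k : ℕ)
    (u : Fin k → X) : Prop :=
  (∀ j, u j ∈ C) ∧
  ∀ j : Fin k, 0 < (j : ℕ) → ∀ x ∈ C,
    ∃ i < j, ∀ i' < j, dist x (u i) ≤ dist (u j) (u i')

/-- Key step in the proof of Theorem 1: if two of the greedy clients `u a, u b` (with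
`a < b`) of a farthest-first traversal fall in a common ball `B(o, λ)`, then every point
of `C` is within distance `2λ` of some greedy client. -/
theorem fft_two_in_ball_all_close {X : Type*} [MetricSpace X]
    (C : Finset X) (hC : C.Nonempty) (k : ℕ) (u : Fin k → X)
    (hfft : IsFarthestFirstTraversal C k u)
    (lam : ℝ) (hlam : 0 ≤ lam) (a b : Fin k) (hab : a < b) (o : X)
    (ha : dist o (u a) ≤ lam) (hb : dist o (u b) ≤ lam) :
    ∀ x ∈ C, ∃ j : Fin k, dist x (u j) ≤ 2 * lam := by
  intro x hx
  obtain ⟨hmem, hmax⟩ := hfft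
  have hb0 : 0 < (b : ℕ) := lt_of_le_of_lt (Nat.zero_le _) hab
  obtain ⟨i, hi, hle⟩ := hmax b hb0 x hx
  refine ⟨i, (hle a hab).trans ?_⟩
  calc dist (u b) (u a) ≤ dist (u b) o + dist o (u a) := dist_triangle _ _ _
    _ ≤ lam + lam := by rw [dist_comm (u b) o]; exact add_le_add hb ha
    _ = 2 * lam := by ring
end

section
/- Let C be a finite nonempty subset of a metric space (X,d), let u_1,...,u_k be a pairwise distinct farthest-first traversal of length k of C, let λ ≥ 0, and let O ⊆ C be a set of at most k points such that every x ∈ C satisfies d(x,o) ≤ λ for some o ∈ O. Then for every o ∈ O there exists an index j ∈ {1,...,k} such that every x ∈ C with d(o,x) ≤ λ satisfies d(u_j,x) ≤ 3λ; i.e., each optimal cluster B(o,λ) ∩ C is contained in B(u_j, 3λ) for some greedy client u_j. (Core geometric content of Theorem 1 in the case F = C, giving the 3-approximation.) -/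
/-- Core geometric content of Theorem 1 in the case `F = C` (3-approximation): if
`u_1, ..., u_k` is a pairwise distinct farthest-first traversal of `C`, and `O ⊆ C` is a
set of at most `k` points such that every `x ∈ C` is within distance `λ` of some `o ∈ O`,
then each optimal cluster `B(o,λ) ∩ C` is contained in `B(u_j, 3λ)` for some greedy
client `u_j`. -/
theorem fft_optimal_cluster_subset_ball {X : Type*} [MetricSpace X]
    (C : Finset X) (hC : C.Nonempty) (k : ℕ) (u : Fin k → X)
    (hfft : IsFarthestFirstTraversal C k u) (hinj : Function.Injective u)
    (lam : ℝ) (hlam : 0 ≤ lam)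
    (O : Finset X) (hO : O ⊆ C) (hOk : O.card ≤ k)
    (hcov : ∀ x ∈ C, ∃ o ∈ O, dist x o ≤ lam) :
    ∀ o ∈ O, ∃ j : Fin k, ∀ x ∈ C, dist o x ≤ lam → dist (u j) x ≤ 3 * lam := by
  classical
  intro o ho
  -- choose for each j an element of O near u j
  have hch : ∀ j : Fin k, ∃ p, p ∈ O ∧ dist (u j) p ≤ lam := by
    intro j
    obtain ⟨p, hp, hd⟩ := hcov (u j) (hfft.1 j)
    exact ⟨p, hp, hd⟩
  choose f hfO hfd using hch
  by_cases hf : Function.Injective f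
  · -- f is a bijection onto O, so o = f j for some j
    have himg : (Finset.univ.image f) = O := by
      apply Finset.eq_of_subset_of_card_le
      · intro x hx
        obtain ⟨j, _, rfl⟩ := Finset.mem_image.mp hx
        exact hfO j
      · rw [Finset.card_image_of_injective _ hf, Finset.card_univ, Fintype.card_fin]
        exact hOk
    have : o ∈ Finset.univ.image f := himg ▸ ho
    obtain ⟨j, _, hfj⟩ := Finset.mem_image.mp this
    refine ⟨j, fun x _ hx => ?_⟩
    have h1 : dist (u j) o ≤ lam := hfj ▸ hfd j
    calc dist (u j) x ≤ dist (u j) o + dist o x := dist_triangle _ _ _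
      _ ≤ lam + lam := add_le_add h1 hx
      _ ≤ 3 * lam := by linarith
  · -- two indices share the same f; everything in C is within 2λ of some u i
    rw [Function.not_injective_iff] at hf
    obtain ⟨a, b, hab, hne⟩ := hf
    -- wlog a < b
    obtain ⟨a, b, hab, hlt⟩ : ∃ a b : Fin k, f a = f b ∧ a < b := by
      rcases lt_or_gt_of_ne hne with h | h
      · exact ⟨a, b, hab, h⟩
      · exact ⟨b, a, hab.symm, h⟩
    have hbpos : 0 < (b : ℕ) := lt_of_le_of_lt (Nat.zero_le _) hlt
    have hd2 : dist (u b) (u a) ≤ 2 * lam := by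
      calc dist (u b) (u a) ≤ dist (u b) (f b) + dist (f b) (u a) := dist_triangle _ _ _
        _ ≤ lam + lam := by
            refine add_le_add (hfd b) ?_
            rw [← hab, dist_comm]
            exact hfd a
        _ = 2 * lam := by ring
    obtain ⟨i, hib, hi⟩ := hfft.2 b hbpos o (hO ho)
    refine ⟨i, fun x hxC hx => ?_⟩
    have h1 : dist o (u i) ≤ 2 * lam := le_trans (hi a hlt) hd2
    calc dist (u i) x ≤ dist (u i) o + dist o x := dist_triangle _ _ _
      _ ≤ 2 * lam + lam := add_le_add (by rw [dist_comm]; exact h1) hx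
      _ = 3 * lam := by ring
end

section
/- Let C be a finite nonempty set of clients and F ⊆ X a set of facilities in a metric space (X,d), and let σ : C → F satisfy d(x,σ(x)) ≤ d(x,f) for all x ∈ C and f ∈ F (σ maps each client to a nearest facility). Let u_1,...,u_k be a pairwise distinct farthest-first traversal of length k of C, let λ ≥ 0, and let O ⊆ F be a set of at most k facilities such that every x ∈ C satisfies d(x,o) ≤ λ for some o ∈ O. Then for every o ∈ O there exists an index j ∈ {1,...,k} such that every x ∈ C with d(o,x) ≤ λ satisfies d(σ(u_j),x) ≤ 5λ; i.e., each optimal cluster B(o,λ) ∩ C is contained in B(σ(u_j), 5λ) for some greedy center σ(u_j). (Core geometric content of Theorem 1 in the general case F ≠ C, giving the 5-approximation.) -/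
/-- Core geometric content of Theorem 1 in the general case `F ≠ C` (5-approximation):
let `σ` map every client to a nearest facility of `F`, let `u_1, ..., u_k` be a pairwise
distinct farthest-first traversal of `C`, and let `O ⊆ F` be a set of at most `k`
facilities such that every `x ∈ C` is within distance `λ` of some `o ∈ O`. Then each
optimal cluster `B(o,λ) ∩ C` is contained in `B(σ(u_j), 5λ)` for some greedy center
`σ(u_j)`. -/
theorem fft_optimal_cluster_subset_ball_facilities {X : Type*} [MetricSpace X]
    (C : Finset X) (hC : C.Nonempty) (F : Set X)
    (σ : X → X) (hσF : ∀ x ∈ C, σ x ∈ F)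
    (hσnear : ∀ x ∈ C, ∀ f ∈ F, dist x (σ x) ≤ dist x f)
    (k : ℕ) (u : Fin k → X)
    (hfft : IsFarthestFirstTraversal C k u) (hinj : Function.Injective u)
    (lam : ℝ) (hlam : 0 ≤ lam)
    (O : Finset X) (hO : ↑O ⊆ F) (hOk : O.card ≤ k)
    (hcov : ∀ x ∈ C, ∃ o ∈ O, dist x o ≤ lam) :
    ∀ o ∈ O, ∃ j : Fin k, ∀ x ∈ C, dist o x ≤ lam → dist (σ (u j)) x ≤ 5 * lam := by
  classical
  intro o ho
  have hk : 0 < k := lt_of_lt_of_le (Finset.card_pos.mpr ⟨o, ho⟩) hOk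
  choose g hgO hgdist using hcov
  -- distance from any u i to its nearest facility is at most lam
  have hσclose : ∀ j : Fin k, dist (u j) (σ (u j)) ≤ lam := fun j =>
    le_trans (hσnear _ (hfft.1 j) _ (hO (hgO _ (hfft.1 j)))) (hgdist _ (hfft.1 j))
  by_cases hcase : ∃ j : Fin k, dist (u j) o ≤ lam
  · -- some greedy point lies in the cluster of o : 3λ bound
    obtain ⟨j, hj⟩ := hcase
    refine ⟨j, fun x hx hxo => ?_⟩
    have h1 : dist (u j) (σ (u j)) ≤ lam :=
      le_trans (hσnear _ (hfft.1 j) o (hO ho)) hj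
    have t := dist_triangle4 (σ (u j)) (u j) o x
    rw [dist_comm (σ (u j)) (u j)] at t
    have h2 : dist o x ≤ lam := hxo
    linarith
  · push_neg at hcase
    -- each u j is covered by a facility in O.erase o
    have hmap : ∀ j ∈ (Finset.univ : Finset (Fin k)),
        g (u j) (hfft.1 j) ∈ O.erase o := by
      intro j _
      refine Finset.mem_erase.mpr ⟨fun h => ?_, hgO _ _⟩
      exact absurd (h ▸ hgdist (u j) (hfft.1 j)) (not_le.mpr (hcase j))
    have hcardlt : (O.erase o).card < (Finset.univ : Finset (Fin k)).card := by
      have := Finset.card_erase_of_mem ho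
      simp only [Finset.card_univ, Fintype.card_fin]
      omega
    obtain ⟨i, -, j, -, hij, heq⟩ :=
      Finset.exists_ne_map_eq_of_card_lt_of_maps_to hcardlt hmap
    -- WLOG i < j
    wlog hlt : i < j generalizing i j
    · exact this j i hij.symm heq.symm (lt_of_le_of_ne (not_lt.mp hlt) hij.symm)
    -- u i and u j are within 2λ
    have huij : dist (u i) (u j) ≤ 2 * lam := by
      have h1 := hgdist (u i) (hfft.1 i)
      have h2 := hgdist (u j) (hfft.1 j)
      have t := dist_triangle (u i) (g (u i) (hfft.1 i)) (u j)
      rw [heq] at t h1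
      rw [dist_comm (g (u j) (hfft.1 j)) (u j)] at t
      linarith
    by_cases hne : ∃ x0 ∈ C, dist o x0 ≤ lam
    · obtain ⟨x0, hx0C, hx0o⟩ := hne
      have hjpos : 0 < (j : ℕ) := by
        have : (i : ℕ) < (j : ℕ) := hlt
        omega
      obtain ⟨i0, hi0lt, hi0⟩ := hfft.2 j hjpos x0 hx0C
      have hx0u : dist x0 (u i0) ≤ 2 * lam := by
        have := hi0 i hlt
        rw [dist_comm (u j) (u i)] at this
        linarith
      refine ⟨i0, fun x hx hxo => ?_⟩
      have t1 := dist_triangle (σ (u i0)) (u i0) x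
      have t2 := dist_triangle (u i0) x0 x
      have t3 := dist_triangle x0 o x
      have h1 := hσclose i0
      rw [dist_comm (σ (u i0)) (u i0)] at t1
      rw [dist_comm (u i0) x0] at t2
      rw [dist_comm x0 o] at t3
      linarith
    · push_neg at hne
      exact ⟨⟨0, hk⟩, fun x hx hxo => absurd hxo (not_le.mpr (hne x hx))⟩
end
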